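/- Let $k$ be a field and let $W$ be a finite-dimensional $k$-vector space with endomorphisms $\phi, \psi\colon W \to W$. Define (ungraded) Dieudonné-type modules $M_\phi = W \oplus W$ with $V(x,y) = (0,x)$ and $F(x,y) = (0,\phi(x))$, and similarly $M_\psi$. Then $M_\phi \cong M_\psi$ (as modules with operators $F, V$, i.e., there is a linear isomorphism commuting with both $F$ and $V$) if and only if $\phi$ and $\psi$ are conjugate by a linear automorphism of $W$. Moreover, $M_\phi$ is decomposable as an $(F,V)$-module if and only if $W$ admits a nontrivial $\phi$-invariant direct sum decomposition. -/

import Mathlib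

namespace Paper17

variable (k W : Type) [Field k] [AddCommGroup W] [Module k W]

/-- The operator `F(x,y) = (0, φ(x))` on `M_φ = W ⊕ W`. -/
def Fop (φ : W →ₗ[k] W) : W × W →ₗ[k] W × W :=
  (LinearMap.inr k W W).comp (φ.comp (LinearMap.fst k W W))

/-- The operator `V(x,y) = (0, x)` on `M_φ = W ⊕ W`. -/
def Vop : W × W →ₗ[k] W × W :=
  (LinearMap.inr k W W).comp (LinearMap.fst k W W)

/-- Isomorphism of `(F,V)`-modules: a linear isomorphism commuting with both
operators. -/
def IsoFV (F V F' V' : W × W →ₗ[k] W × W) : Prop :=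
  ∃ e : (W × W) ≃ₗ[k] (W × W),
    (∀ x, e (F x) = F' (e x)) ∧ (∀ x, e (V x) = V' (e x))

/-- Decomposability of an `(F,V)`-module structure on `W ⊕ W`. -/
def DecompFV (F V : W × W →ₗ[k] W × W) : Prop :=
  ∃ N₁ N₂ : Submodule k (W × W),
    N₁ ≠ ⊥ ∧ N₂ ≠ ⊥ ∧ IsCompl N₁ N₂ ∧
      (∀ x ∈ N₁, F x ∈ N₁ ∧ V x ∈ N₁) ∧
      (∀ x ∈ N₂, F x ∈ N₂ ∧ V x ∈ N₂)

/-- `W` admits a nontrivial `φ`-invariant direct sum decomposition. -/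
def DecompPhi (φ : W →ₗ[k] W) : Prop :=
  ∃ W₁ W₂ : Submodule k W,
    W₁ ≠ ⊥ ∧ W₂ ≠ ⊥ ∧ IsCompl W₁ W₂ ∧
      (∀ x ∈ W₁, φ x ∈ W₁) ∧ (∀ x ∈ W₂, φ x ∈ W₂)

lemma Fop_apply (φ : W →ₗ[k] W) (p : W × W) : Fop k W φ p = (0, φ p.1) := rfl
lemma Vop_apply (p : W × W) : Vop k W p = (0, p.1) := rfl

/-- `M_φ ≅ M_ψ` as `(F,V)`-modules iff `φ` and `ψ` are
conjugate; and `M_φ` is decomposable iff `W` admits a nontrivial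
`φ`-invariant direct sum decomposition. -/
theorem dieudonne_type_modules_classification
    [FiniteDimensional k W] (φ ψ : W →ₗ[k] W) :
    (IsoFV k W (Fop k W φ) (Vop k W) (Fop k W ψ) (Vop k W) ↔
      ∃ u : W ≃ₗ[k] W, ∀ x, u (φ x) = ψ (u x)) ∧
    (DecompFV k W (Fop k W φ) (Vop k W) ↔ DecompPhi k W φ) := by
  constructor
  · constructor
    · rintro ⟨e, hF, hV⟩
      set a : W →ₗ[k] W :=
        (LinearMap.fst k W W) ∘ₗ (e : W × W →ₗ[k] W × W) ∘ₗ (LinearMap.inl k W W) with ha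
      have haval : ∀ x : W, a x = (e (x, 0)).1 := fun x => rfl
      have key : ∀ x : W, e (0, x) = (0, a x) := by
        intro x
        have := hV (x, 0)
        rw [Vop_apply, Vop_apply] at this
        simpa [haval] using this
      have hconj : ∀ x, a (φ x) = ψ (a x) := by
        intro x
        have := hF (x, 0)
        rw [Fop_apply, Fop_apply] at this
        simp only [key (φ x)] at this
        have := congrArg Prod.snd this
        simpa [haval] using this
      have hinj : Function.Injective a := by
        rw [injective_iff_map_eq_zero]
        intro x hx
        have h0 : e (0, x) = (0, (0 : W)) := by rw [key, hx]
        have : ((0 : W), x) = 0 := by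
          apply e.injective; exact h0.trans (map_zero e).symm
        simpa using congrArg Prod.snd this
      have hsurj : Function.Surjective a := by
        intro w
        set m := e.symm (0, w) with hm
        have hem : e m = (0, w) := e.apply_symm_apply _
        have h1 : e (Vop k W m) = 0 := by
          rw [hV, hem, Vop_apply]; simp
        have h2 : Vop k W m = 0 := by
          apply e.injective; simpa using h1
        have hm1 : m.1 = 0 := by
          have := congrArg Prod.snd h2; simpa [Vop_apply] using this
        have hme : m = ((0 : W), m.2) := by
          rw [← hm1]
        rw [hme, key] at hem
        exact ⟨m.2, (congrArg Prod.snd hem)⟩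
      refine ⟨LinearEquiv.ofBijective a ⟨hinj, hsurj⟩, fun x => ?_⟩
      exact hconj x
    · rintro ⟨u, hu⟩
      refine ⟨u.prodCongr u, fun p => ?_, fun p => ?_⟩ <;>
        simp [Fop_apply, Vop_apply, hu]
  · constructor
    · rintro ⟨N₁, N₂, h1, h2, hc, hi1, hi2⟩
      set A₁ := N₁.map (LinearMap.fst k W W) with hA1
      set A₂ := N₂.map (LinearMap.fst k W W) with hA2
      set B₁ := N₁.comap (LinearMap.inr k W W) with hB1
      set B₂ := N₂.comap (LinearMap.inr k W W) with hB2
      have hAB : ∀ (N : Submodule k (W × W)),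
          (∀ x ∈ N, Fop k W φ x ∈ N ∧ Vop k W x ∈ N) →
          N.map (LinearMap.fst k W W) ≤ N.comap (LinearMap.inr k W W) := by
        rintro N hN x ⟨n, hn, rfl⟩
        have := (hN n hn).2
        rw [Vop_apply] at this
        simpa [Submodule.mem_comap] using this
      have hAB1 : A₁ ≤ B₁ := hAB N₁ hi1
      have hAB2 : A₂ ≤ B₂ := hAB N₂ hi2
      have hphi : ∀ (N : Submodule k (W × W)),
          (∀ x ∈ N, Fop k W φ x ∈ N ∧ Vop k W x ∈ N) →
          ∀ x ∈ N.map (LinearMap.fst k W W), φ x ∈ N.comap (LinearMap.inr k W W) := by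
        rintro N hN x ⟨n, hn, rfl⟩
        have := (hN n hn).1
        rw [Fop_apply] at this
        simpa [Submodule.mem_comap] using this
      have hsup : A₁ ⊔ A₂ = ⊤ := by
        rw [eq_top_iff]
        intro x _
        have : ((x, 0) : W × W) ∈ N₁ ⊔ N₂ := by rw [hc.sup_eq_top]; trivial
        obtain ⟨n₁, hn₁, n₂, hn₂, hsum⟩ := Submodule.mem_sup.mp this
        have : x = n₁.1 + n₂.1 := by
          have := congrArg Prod.fst hsum; simpa using this.symm
        rw [this]
        exact Submodule.add_mem_sup ⟨n₁, hn₁, rfl⟩ ⟨n₂, hn₂, rfl⟩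
      have hinf : B₁ ⊓ B₂ = ⊥ := by
        rw [eq_bot_iff]
        intro y ⟨hy1, hy2⟩
        have : ((0 : W), y) ∈ N₁ ⊓ N₂ := ⟨hy1, hy2⟩
        rw [hc.inf_eq_bot] at this
        simpa using congrArg Prod.snd (Submodule.mem_bot _ |>.mp this)
      have hBA : ∀ {y : W}, y ∈ B₁ → y ∈ A₁ := by
        intro y hy
        have : y ∈ A₁ ⊔ A₂ := by rw [hsup]; trivial
        obtain ⟨a₁, ha₁, a₂, ha₂, hsum⟩ := Submodule.mem_sup.mp this
        have ha2' : a₂ = y - a₁ := by rw [← hsum]; abel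
        have hmem : a₂ ∈ B₁ ⊓ B₂ := by
          refine ⟨?_, hAB2 ha₂⟩
          rw [ha2']; exact B₁.sub_mem hy (hAB1 ha₁)
        rw [hinf, Submodule.mem_bot] at hmem
        rw [← hsum, hmem, add_zero]; exact ha₁
      have hBA' : ∀ {y : W}, y ∈ B₂ → y ∈ A₂ := by
        intro y hy
        have : y ∈ A₁ ⊔ A₂ := by rw [hsup]; trivial
        obtain ⟨a₁, ha₁, a₂, ha₂, hsum⟩ := Submodule.mem_sup.mp this
        have ha1' : a₁ = y - a₂ := by rw [← hsum]; abel
        have hmem : a₁ ∈ B₁ ⊓ B₂ := by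
          refine ⟨hAB1 ha₁, ?_⟩
          rw [ha1']; exact B₂.sub_mem hy (hAB2 ha₂)
        rw [hinf, Submodule.mem_bot] at hmem
        rw [← hsum, hmem, zero_add]; exact ha₂
      have hA1B1 : A₁ = B₁ := le_antisymm hAB1 (fun _ h => hBA h)
      have hA2B2 : A₂ = B₂ := le_antisymm hAB2 (fun _ h => hBA' h)
      refine ⟨A₁, A₂, ?_, ?_, ?_, ?_, ?_⟩
      · intro hbot
        apply h1
        rw [eq_bot_iff]
        intro n hn
        have hn1 : n.1 = 0 := by
          have : n.1 ∈ A₁ := ⟨n, hn, rfl⟩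
          rwa [hbot, Submodule.mem_bot] at this
        have hn2 : n.2 = 0 := by
          have hmem : n.2 ∈ B₁ := by
            show ((0 : W), n.2) ∈ N₁
            have hne : ((0 : W), n.2) = n := by rw [← hn1]
            rw [hne]; exact hn
          rwa [← hA1B1, hbot, Submodule.mem_bot] at hmem
        rw [Submodule.mem_bot, Prod.ext_iff]; exact ⟨hn1, hn2⟩
      · intro hbot
        apply h2
        rw [eq_bot_iff]
        intro n hn
        have hn1 : n.1 = 0 := by
          have : n.1 ∈ A₂ := ⟨n, hn, rfl⟩
          rwa [hbot, Submodule.mem_bot] at this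
        have hn2 : n.2 = 0 := by
          have hmem : n.2 ∈ B₂ := by
            show ((0 : W), n.2) ∈ N₂
            have hne : ((0 : W), n.2) = n := by rw [← hn1]
            rw [hne]; exact hn
          rwa [← hA2B2, hbot, Submodule.mem_bot] at hmem
        rw [Submodule.mem_bot, Prod.ext_iff]; exact ⟨hn1, hn2⟩
      · exact isCompl_iff.mpr ⟨disjoint_iff.mpr (by
            rw [eq_bot_iff]; intro y ⟨hy1, hy2⟩
            rw [← hinf]; exact ⟨hAB1 hy1, hAB2 hy2⟩),
          codisjoint_iff.mpr hsup⟩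
      · intro x hx
        rw [hA1B1]; exact hphi N₁ hi1 x hx
      · intro x hx
        rw [hA2B2]; exact hphi N₂ hi2 x hx
    · rintro ⟨W₁, W₂, h1, h2, hc, hφ1, hφ2⟩
      refine ⟨W₁.prod W₁, W₂.prod W₂, ?_, ?_, ?_, ?_, ?_⟩
      · intro hbot
        apply h1
        rw [eq_bot_iff]
        intro x hx
        have : ((x, x) : W × W) ∈ W₁.prod W₁ := ⟨hx, hx⟩
        rw [hbot, Submodule.mem_bot] at this
        simpa using congrArg Prod.fst this
      · intro hbot
        apply h2
        rw [eq_bot_iff]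
        intro x hx
        have : ((x, x) : W × W) ∈ W₂.prod W₂ := ⟨hx, hx⟩
        rw [hbot, Submodule.mem_bot] at this
        simpa using congrArg Prod.fst this
      · refine isCompl_iff.mpr ⟨disjoint_iff.mpr ?_, codisjoint_iff.mpr ?_⟩
        · rw [eq_bot_iff]
          rintro ⟨x, y⟩ ⟨⟨hx1, hy1⟩, hx2, hy2⟩
          have hx : x = 0 := by
            have : x ∈ W₁ ⊓ W₂ := ⟨hx1, hx2⟩
            rwa [hc.inf_eq_bot, Submodule.mem_bot] at this
          have hy : y = 0 := by
            have : y ∈ W₁ ⊓ W₂ := ⟨hy1, hy2⟩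
            rwa [hc.inf_eq_bot, Submodule.mem_bot] at this
          simp [hx, hy]
        · rw [eq_top_iff]
          rintro ⟨x, y⟩ _
          have hx : x ∈ W₁ ⊔ W₂ := by rw [hc.sup_eq_top]; trivial
          have hy : y ∈ W₁ ⊔ W₂ := by rw [hc.sup_eq_top]; trivial
          obtain ⟨x₁, hx₁, x₂, hx₂, hxs⟩ := Submodule.mem_sup.mp hx
          obtain ⟨y₁, hy₁, y₂, hy₂, hys⟩ := Submodule.mem_sup.mp hy
          rw [← hxs, ← hys]
          exact Submodule.add_mem_sup
            (show ((x₁, y₁) : W × W) ∈ W₁.prod W₁ from ⟨hx₁, hy₁⟩)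
            (show ((x₂, y₂) : W × W) ∈ W₂.prod W₂ from ⟨hx₂, hy₂⟩)
      · rintro ⟨x, y⟩ ⟨hx, hy⟩
        exact ⟨⟨W₁.zero_mem, hφ1 x hx⟩, ⟨W₁.zero_mem, hx⟩⟩
      · rintro ⟨x, y⟩ ⟨hx, hy⟩
        exact ⟨⟨W₂.zero_mem, hφ2 x hx⟩, ⟨W₂.zero_mem, hx⟩⟩


end Paper17
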